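/- Let M be an invertible (k+1)×(k+1) real matrix with column sums 1, D a (k+1)×(k+1) matrix with column sums 0, p ∈ ℝ^{k+1}, and e ∈ ℝ^{k+1} a row vector. Define the row vector η ∈ ℝᵏ by ηⱼ = e_{j+1} − e_1 (j = 1,…,k), the k×k matrix Ξ by Ξ_{i,j} = M_{i+1,j+1} − M_{i+1,1}, and d ∈ ℝᵏ as the last k coordinates of D·p. Then e·M⁻¹·D·p = η·Ξ⁻¹·d. -/

import Mathlib

/-!
Since `M` has column sums one and `D` column sums zero, `u = M⁻¹ D p` has coordinate sum
zero, so `u` is determined by its last `k` coordinates and `e ⬝ᵥ u = η ⬝ᵥ tail u`. Applying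
the same identity to the rows of `M` gives `Ξ *ᵥ tail u = tail (M u) = d`, and `Ξ` is
invertible because every `d` arises this way; hence `tail u = Ξ⁻¹ d`.
-/

open Matrix

namespace Matrix

variable {R : Type*}

theorem sum_mulVec_of_forall_sum_col_eq {m n : Type*} [Fintype m] [Fintype n] [CommSemiring R]
    {M : Matrix m n R} {c : R} (hM : ∀ j, ∑ i, M i j = c) (x : n → R) :
    ∑ i, (M *ᵥ x) i = c * ∑ j, x j := by
  simp only [mulVec, dotProduct]
  rw [Finset.sum_comm]
  simp only [← Finset.sum_mul, hM, Finset.mul_sum]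

theorem sum_inv_mulVec_of_forall_sum_col_eq_one {m : Type*} [Fintype m] [DecidableEq m]
    [CommRing R] {M : Matrix m m R} (hM : IsUnit M.det) (hMcol : ∀ j, ∑ i, M i j = 1)
    (v : m → R) : ∑ i, (M⁻¹ *ᵥ v) i = ∑ i, v i := by
  conv_rhs => rw [← one_mulVec v, ← mul_nonsing_inv M hM, ← mulVec_mulVec]
  rw [sum_mulVec_of_forall_sum_col_eq hMcol, one_mul]

variable [CommRing R] {k : ℕ}

def contrast (e : Fin (k + 1) → R) : Fin k → R := fun j => e j.succ - e 0

def contrastMatrix (M : Matrix (Fin (k + 1)) (Fin (k + 1)) R) : Matrix (Fin k) (Fin k) R :=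
  of fun i => contrast (M i.succ)

theorem contrast_dotProduct_tail (e : Fin (k + 1) → R) {x : Fin (k + 1) → R}
    (hx : ∑ i, x i = 0) : contrast e ⬝ᵥ Fin.tail x = e ⬝ᵥ x := by
  rw [Fin.sum_univ_succ] at hx
  simp only [dotProduct, contrast, Fin.tail, Fin.sum_univ_succ (f := fun i => e i * x i),
    sub_mul, Finset.sum_sub_distrib, ← Finset.mul_sum, eq_neg_of_add_eq_zero_right hx]
  ring

theorem contrastMatrix_mulVec_tail (M : Matrix (Fin (k + 1)) (Fin (k + 1)) R)
    {x : Fin (k + 1) → R} (hx : ∑ i, x i = 0) :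
    contrastMatrix M *ᵥ Fin.tail x = Fin.tail (M *ᵥ x) :=
  funext fun i => contrast_dotProduct_tail (M i.succ) hx

section ColumnSumsOne

variable {M : Matrix (Fin (k + 1)) (Fin (k + 1)) R} (hM : IsUnit M.det)
  (hMcol : ∀ j, ∑ i, M i j = 1)
include hM hMcol

theorem contrastMatrix_mulVec_tail_inv_mulVec {v : Fin (k + 1) → R} (hv : ∑ i, v i = 0) :
    contrastMatrix M *ᵥ Fin.tail (M⁻¹ *ᵥ v) = Fin.tail v := by
  rw [contrastMatrix_mulVec_tail M (by rw [sum_inv_mulVec_of_forall_sum_col_eq_one hM hMcol, hv]),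
    mulVec_mulVec, mul_nonsing_inv M hM, one_mulVec]

theorem isUnit_det_contrastMatrix : IsUnit (contrastMatrix M).det := by
  rw [← isUnit_iff_isUnit_det, ← mulVec_surjective_iff_isUnit]
  intro d
  exact ⟨_, (contrastMatrix_mulVec_tail_inv_mulVec hM hMcol (v := Fin.cons (-∑ j, d j) d)
    (by simp [Fin.sum_univ_succ])).trans (Fin.tail_cons _ _)⟩

theorem contrastMatrix_inv_mulVec_tail {v : Fin (k + 1) → R} (hv : ∑ i, v i = 0) :
    (contrastMatrix M)⁻¹ *ᵥ Fin.tail v = Fin.tail (M⁻¹ *ᵥ v) := by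
  rw [← contrastMatrix_mulVec_tail_inv_mulVec hM hMcol hv, mulVec_mulVec,
    nonsing_inv_mul _ (isUnit_det_contrastMatrix hM hMcol), one_mulVec]

end ColumnSumsOne

end Matrix

/-- Reparameterization identity: with `M` invertible with column sums 1, `D` with column
sums 0, `p` a vector, `e` a row vector, `η j = e (j+1) - e 0` the contrast vector of `e`,
`Ξ` the contrast matrix of `M`, and `d` the last `k` coordinates of `D *ᵥ p`, one has
`e ⬝ᵥ (M⁻¹ *ᵥ (D *ᵥ p)) = η ⬝ᵥ (Ξ⁻¹ *ᵥ d)`. -/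
theorem bias_reparameterization {k : ℕ} (M D : Matrix (Fin (k+1)) (Fin (k+1)) ℝ)
    (hM : IsUnit M.det)
    (hMcol : ∀ j, ∑ i, M i j = 1)
    (hDcol : ∀ j, ∑ i, D i j = 0)
    (p : Fin (k+1) → ℝ) (e : Fin (k+1) → ℝ)
    (η : Fin k → ℝ)
    (hη : ∀ j, η j = e j.succ - e 0)
    (Ξ : Matrix (Fin k) (Fin k) ℝ)
    (hΞ : ∀ i j, Ξ i j = M i.succ j.succ - M i.succ 0)
    (d : Fin k → ℝ)
    (hd : ∀ j, d j = (D.mulVec p) j.succ) :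
    e ⬝ᵥ (M⁻¹.mulVec (D.mulVec p)) = η ⬝ᵥ (Ξ⁻¹.mulVec d) := by
  obtain rfl : η = contrast e := funext hη
  obtain rfl : Ξ = contrastMatrix M := Matrix.ext hΞ
  obtain rfl : d = Fin.tail (D *ᵥ p) := funext hd
  have hv : ∑ i, (D *ᵥ p) i = 0 := by
    rw [sum_mulVec_of_forall_sum_col_eq hDcol, zero_mul]
  rw [contrastMatrix_inv_mulVec_tail hM hMcol hv, contrast_dotProduct_tail e
    (by rw [sum_inv_mulVec_of_forall_sum_col_eq_one hM hMcol, hv])]
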